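/- Let p be a prime and let B be a finite brace whose order is a power of p. If B is supersoluble, then B is centrally nilpotent. -/

import Mathlib

/-- A (skew left) brace: a set with an additive group structure (not necessarily abelian)
and a multiplicative group structure sharing the same identity, satisfying the skew
distributive law `a * (b + c) = a * b + -a + a * c`. -/
class SkewBrace (B : Type*) extends AddGroup B, Group B where
  one_eq_zero : (1 : B) = (0 : B)
  skew_distrib : ∀ a b c : B, a * (b + c) = a * b + -a + a * c

/-- A group is supersoluble if it has a finite chain of normal subgroups with all
factors cyclic. -/
def Group.IsSupersoluble (G : Type*) [Group G] : Prop :=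
  ∃ (n : ℕ) (H : ℕ → Subgroup G),
    H 0 = ⊥ ∧ H n = ⊤ ∧ (∀ i, (H i).Normal) ∧ (∀ i, i < n → H i ≤ H (i + 1)) ∧
    ∀ i, i < n → ∃ x ∈ H (i + 1), ∀ y ∈ H (i + 1), ∃ k : ℤ, (x ^ k)⁻¹ * y ∈ H i

namespace SkewBrace

variable {B : Type*} [SkewBrace B]

/-- `lam a b = -a + a * b`, i.e. `λ_a(b)`. -/
def lam (a b : B) : B := -a + a * b

/-- the star operation `a ∗ b = λ_a(b) - b`. -/
def starOp (a b : B) : B := lam a b + -b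

/-- the additive commutator `[a,b]_+`. -/
def addCommutator (a b : B) : B := -a + -b + a + b

/-- A subbrace of `B`: a subset that is a subgroup of both `(B,+)` and `(B,·)`. -/
structure Subbrace (B : Type*) [SkewBrace B] where
  carrier : Set B
  zero_mem : (0 : B) ∈ carrier
  add_mem : ∀ {a b : B}, a ∈ carrier → b ∈ carrier → a + b ∈ carrier
  neg_mem : ∀ {a : B}, a ∈ carrier → -a ∈ carrier
  mul_mem : ∀ {a b : B}, a ∈ carrier → b ∈ carrier → a * b ∈ carrier
  inv_mem : ∀ {a : B}, a ∈ carrier → a⁻¹ ∈ carrier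

/-- An ideal of `B`: a subbrace that is normal in `(B,+)` and in `(B,·)` and is
invariant under all the maps `λ_b`. -/
structure BraceIdeal (B : Type*) [SkewBrace B] extends Subbrace B where
  addConj_mem : ∀ (b : B) {a : B}, a ∈ carrier → b + a + -b ∈ carrier
  mulConj_mem : ∀ (b : B) {a : B}, a ∈ carrier → b * a * b⁻¹ ∈ carrier
  lam_mem : ∀ (b : B) {a : B}, a ∈ carrier → lam b a ∈ carrier

/-- The additive subgroup underlying a subbrace. -/
def Subbrace.addSubgroup (S : Subbrace B) : AddSubgroup B where
  carrier := S.carrier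
  zero_mem' := S.zero_mem
  add_mem' := S.add_mem
  neg_mem' := S.neg_mem

/-- The multiplicative subgroup underlying a subbrace. -/
def Subbrace.subgroup (S : Subbrace B) : Subgroup B where
  carrier := S.carrier
  one_mem' := by rw [one_eq_zero]; exact S.zero_mem
  mul_mem' := S.mul_mem
  inv_mem' := S.inv_mem

/-- Given ideals `J ≤ I` of `B`, `MemSocQuotRel I J x` says that the coset of `x`
lies in `Soc(I/J) = Ker(λ) ∩ Z(I/J, +)` (for `I = B` take `I = Set.univ`). -/
def MemSocQuotRel (I J : Set B) (x : B) : Prop :=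
  x ∈ I ∧ (∀ y ∈ I, -y + lam x y ∈ J) ∧ ∀ y ∈ I, -(y + x) + (x + y) ∈ J

/-- Given ideals `J ≤ I` of `B`, `MemZetaQuotRel I J x` says that the coset of `x`
lies in `ζ(I/J) = Soc(I/J) ∩ Z(I/J, ·)`. -/
def MemZetaQuotRel (I J : Set B) (x : B) : Prop :=
  MemSocQuotRel I J x ∧ ∀ y ∈ I, (y * x)⁻¹ * (x * y) ∈ J

/-- The coset of `x` lies in `Soc(B/J)`. -/
def MemSocQuot (J : Set B) (x : B) : Prop := MemSocQuotRel Set.univ J x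

/-- The coset of `x` lies in `ζ(B/J)`. -/
def MemZetaQuot (J : Set B) (x : B) : Prop := MemZetaQuotRel Set.univ J x

/-- For ideals `I ≤ J`, the additive group of the quotient `J/I` is infinite cyclic. -/
def QuotAddInfCyclic (I J : Set B) : Prop :=
  ∃ x ∈ J, (∀ y ∈ J, ∃ n : ℤ, -(n • x) + y ∈ I) ∧ ∀ n : ℤ, n • x ∈ I → n = 0

/-- For ideals `I ≤ J`, the quotient `J/I` has prime order `p`. -/
def QuotPrimeOrder (I J : Set B) (p : ℕ) : Prop :=
  p.Prime ∧ ∃ x ∈ J, x ∉ I ∧ p • x ∈ I ∧ ∀ y ∈ J, ∃ n : ℤ, -(n • x) + y ∈ I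

/-- A brace is supersoluble if it has a finite chain of ideals each factor of which
either is additively infinite cyclic and contained in the socle of the corresponding
quotient, or has prime order. -/
def IsSupersoluble (B : Type*) [SkewBrace B] : Prop :=
  ∃ (n : ℕ) (I : ℕ → BraceIdeal B),
    (I 0).carrier = {0} ∧ (I n).carrier = Set.univ ∧
    (∀ i, i < n → (I i).carrier ⊆ (I (i + 1)).carrier) ∧
    ∀ i, i < n →
      (QuotAddInfCyclic (I i).carrier (I (i + 1)).carrier ∧
        ∀ x ∈ (I (i + 1)).carrier, MemSocQuot (I i).carrier x) ∨
      ∃ p : ℕ, QuotPrimeOrder (I i).carrier (I (i + 1)).carrier p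

/-- The upper socle series of the brace (carrier of the ideal) `I`. -/
def socChainRel (I : Set B) : ℕ → Set B
  | 0 => {0}
  | n + 1 => {x | MemSocQuotRel I (socChainRel I n) x}

/-- The upper central series of the brace (carrier of the ideal) `I`. -/
def zetaChainRel (I : Set B) : ℕ → Set B
  | 0 => {0}
  | n + 1 => {x | MemZetaQuotRel I (zetaChainRel I n) x}

/-- The upper socle series `Soc_n(B)` of `B`. -/
def socChain (B : Type*) [SkewBrace B] : ℕ → Set B := socChainRel Set.univ

/-- The upper central series `ζ_n(B)` of `B`. -/
def zetaChain (B : Type*) [SkewBrace B] : ℕ → Set B := zetaChainRel Set.univ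

/-- A brace is centrally nilpotent if its upper central series reaches `B`. -/
def IsCentrallyNilpotent (B : Type*) [SkewBrace B] : Prop :=
  ∃ m : ℕ, zetaChain B m = Set.univ

end SkewBrace

/-!
Every factor `J / I` of the supersoluble series has order `p`: an infinite cyclic factor cannot
occur in a finite brace, and a factor of prime order `q` in a brace of order `p ^ k` forces
`q = p`. Additive conjugation, multiplicative conjugation and the maps `λ_b` act on `J / I` by
automorphisms of `p`-power order, and such an automorphism `x ↦ m • x` of a group of order `p` is
trivial because `m ^ (p ^ k) ≡ m [ZMOD p]`. Hence `J / I` is central in `(B / I, +)` and in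
`(B / I, ·)` and is fixed by `λ`, which together put `J / I` inside `ζ(B / I)`; by induction the
`i`-th ideal of the series lies in `ζ_i(B)`.
-/

section GroupLemmas

variable {G : Type*} [Group G] {p : ℕ} [Fact p.Prime] {x : G}

@[to_additive]
theorem zpow_pow_prime_pow (hx : orderOf x = p) (m : ℤ) (k : ℕ) : x ^ (m ^ p ^ k) = x ^ m := by
  rw [zpow_eq_zpow_iff_modEq, hx, ← ZMod.intCast_eq_intCast_iff]
  push_cast
  exact ZMod.pow_card_pow _

@[to_additive]
theorem MonoidHom.apply_eq_self_of_iterate_eq_self (σ : G →* G) (hx : orderOf x = p) {k : ℕ}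
    (hσk : σ^[p ^ k] x = x) (hσx : σ x ∈ Subgroup.zpowers x) : σ x = x := by
  obtain ⟨m, hm⟩ := Subgroup.mem_zpowers_iff.mp hσx
  have hiter : ∀ n : ℕ, σ^[n] x = x ^ (m ^ n) := by
    intro n
    induction n with
    | zero => simp
    | succ n ih => rw [Function.iterate_succ_apply', ih, map_zpow, ← hm, ← zpow_mul, pow_succ']
  rw [← hm, ← zpow_pow_prime_pow hx m k, ← hiter, hσk]

@[to_additive]
theorem MulAut.conj_iterate (g : G) (n : ℕ) :
    (⇑(MulAut.conj g))^[n] = ⇑(MulAut.conj (g ^ n)) := by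
  induction n with
  | zero => simp
  | succ n ih => rw [Function.iterate_succ', ih, pow_succ', map_mul, MulAut.coe_mul]

@[to_additive]
theorem commute_of_conj_mem_zpowers {g : G} {k : ℕ} (hx : orderOf x = p) (hg : g ^ p ^ k = 1)
    (h : g * x * g⁻¹ ∈ Subgroup.zpowers x) : Commute g x := by
  have := (MulAut.conj g).toMonoidHom.apply_eq_self_of_iterate_eq_self hx (k := k)
    (by simp [MulAut.conj_iterate, hg]) h
  exact mul_inv_eq_iff_eq_mul.mp this

end GroupLemmas

namespace SkewBrace

variable {B : Type*} [SkewBrace B]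

theorem mul_eq_add_lam (a b : B) : a * b = a + lam a b := by
  rw [lam, add_neg_cancel_left]

theorem lam_add (a b c : B) : lam a (b + c) = lam a b + lam a c := by
  rw [lam, lam, lam, skew_distrib]
  simp only [add_assoc]

def lamAddHom (a : B) : B →+ B := AddMonoidHom.mk' (lam a) (lam_add a)

theorem lam_neg (a b : B) : lam a (-b) = -lam a b := map_neg (lamAddHom a) b

theorem lam_one (b : B) : lam 1 b = b := by
  rw [lam, one_mul, one_eq_zero, neg_zero, zero_add]

theorem lam_mul (a b c : B) : lam (a * b) c = lam a (lam b c) := by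
  have h : lam a (lam b c) = -lam a b + lam a (b * c) := by
    rw [← lam_neg, ← lam_add]
    rfl
  rw [h, lam, lam, lam, neg_add_rev, neg_neg, mul_assoc]
  simp only [add_assoc, add_neg_cancel_left]

theorem lam_inv_lam (a b : B) : lam a⁻¹ (lam a b) = b := by
  rw [← lam_mul, inv_mul_cancel, lam_one]

namespace BraceIdeal

instance (I : BraceIdeal B) : I.addSubgroup.Normal := ⟨fun _ ha g => I.addConj_mem g ha⟩

instance (I : BraceIdeal B) : I.subgroup.Normal := ⟨fun _ ha g => I.mulConj_mem g ha⟩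

-- `-u + v = λ_u (u⁻¹ * v)`, and ideals are `λ`-invariant.
theorem mk_eq_mk_iff (I : BraceIdeal B) {u v : B} :
    (u : B ⧸ I.addSubgroup) = v ↔ (u : B ⧸ I.subgroup) = v := by
  have h : -u + v = lam u (u⁻¹ * v) := by rw [lam, mul_inv_cancel_left]
  rw [QuotientAddGroup.eq, QuotientGroup.eq]
  refine ⟨fun huv => ?_, fun huv => h ▸ I.lam_mem u huv⟩
  rw [← lam_inv_lam u (u⁻¹ * v), ← h]
  exact I.lam_mem u⁻¹ huv

def lamQuot (I : BraceIdeal B) (a : B) : B ⧸ I.addSubgroup →+ B ⧸ I.addSubgroup :=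
  QuotientAddGroup.map _ _ (lamAddHom a) fun _ hb => I.lam_mem a hb

theorem lamQuot_mk (I : BraceIdeal B) (a b : B) :
    I.lamQuot a b = ((lam a b : B) : B ⧸ I.addSubgroup) := rfl

theorem lamQuot_iterate_mk (I : BraceIdeal B) (a b : B) (n : ℕ) :
    (I.lamQuot a)^[n] b = ((lam (a ^ n) b : B) : B ⧸ I.addSubgroup) := by
  induction n with
  | zero => rw [Function.iterate_zero_apply, pow_zero, lam_one]
  | succ n ih => rw [Function.iterate_succ_apply', ih, lamQuot_mk, ← lam_mul, ← pow_succ']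

end BraceIdeal

/-- `J / I` is cyclic of order `p`, generated by the class of `x`. -/
structure CyclicFactorGen (I J : BraceIdeal B) (p : ℕ) (x : B) : Prop where
  mem : x ∈ J.carrier
  addOrderOf_mk : addOrderOf (x : B ⧸ I.addSubgroup) = p
  mk_mem_zmultiples : ∀ w ∈ J.carrier,
    (w : B ⧸ I.addSubgroup) ∈ AddSubgroup.zmultiples (x : B ⧸ I.addSubgroup)

namespace CyclicFactorGen

variable {p k : ℕ} [Fact p.Prime] {I J : BraceIdeal B} {x : B}

theorem addCommute_mk (hx : CyclicFactorGen I J p x) (hcard : Nat.card B = p ^ k)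
    (y : B) {w : B} (hw : w ∈ J.carrier) : AddCommute (y : B ⧸ I.addSubgroup) w := by
  have hyx : AddCommute (y : B ⧸ I.addSubgroup) x := by
    refine addCommute_of_addConj_mem_zmultiples hx.addOrderOf_mk (k := k) ?_
      (hx.mk_mem_zmultiples _ (J.addConj_mem y hx.mem))
    rw [← QuotientAddGroup.mk_nsmul, ← hcard, card_nsmul_eq_zero', QuotientAddGroup.mk_zero]
  obtain ⟨n, hn⟩ := hx.mk_mem_zmultiples w hw
  rw [← hn]
  exact hyx.zsmul_right n

theorem mk_lam (hx : CyclicFactorGen I J p x) (hcard : Nat.card B = p ^ k)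
    (b : B) {w : B} (hw : w ∈ J.carrier) : ((lam b w : B) : B ⧸ I.addSubgroup) = w := by
  have hbx : I.lamQuot b x = x := by
    refine (I.lamQuot b).apply_eq_self_of_iterate_eq_self hx.addOrderOf_mk (k := k) ?_
      (hx.mk_mem_zmultiples _ (J.lam_mem b hx.mem))
    rw [BraceIdeal.lamQuot_iterate_mk, ← hcard, pow_card_eq_one', lam_one]
  obtain ⟨n, hn⟩ := hx.mk_mem_zmultiples w hw
  rw [← BraceIdeal.lamQuot_mk, ← hn, map_zsmul, hbx]

theorem mk_mul (hx : CyclicFactorGen I J p x) (hcard : Nat.card B = p ^ k)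
    (b : B) {w : B} (hw : w ∈ J.carrier) :
    ((b * w : B) : B ⧸ I.addSubgroup) = (b : B ⧸ I.addSubgroup) + w := by
  rw [mul_eq_add_lam, QuotientAddGroup.mk_add, hx.mk_lam hcard b hw]

theorem mk_zpow (hx : CyclicFactorGen I J p x) (hcard : Nat.card B = p ^ k) (n : ℤ) :
    ((x ^ n : B) : B ⧸ I.addSubgroup) = n • (x : B ⧸ I.addSubgroup) := by
  induction n using Int.induction_on with
  | zero => rw [zpow_zero, one_eq_zero, zero_zsmul, QuotientAddGroup.mk_zero]
  | succ n ih => rw [zpow_add_one, hx.mk_mul hcard _ hx.mem, ih, add_zsmul, one_zsmul]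
  | pred n ih =>
    have hinv : ((x⁻¹ : B) : B ⧸ I.addSubgroup) = -(x : B ⧸ I.addSubgroup) := by
      rw [eq_neg_iff_add_eq_zero, ← hx.mk_mul hcard _ hx.mem, inv_mul_cancel,
        one_eq_zero, QuotientAddGroup.mk_zero]
    rw [zpow_sub_one, hx.mk_mul hcard _ (J.inv_mem hx.mem), ih, hinv, sub_zsmul, one_zsmul]

theorem mk_mem_zpowers (hx : CyclicFactorGen I J p x) (hcard : Nat.card B = p ^ k)
    {w : B} (hw : w ∈ J.carrier) :
    (w : B ⧸ I.subgroup) ∈ Subgroup.zpowers (x : B ⧸ I.subgroup) := by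
  obtain ⟨n, hn⟩ := AddSubgroup.mem_zmultiples_iff.mp (hx.mk_mem_zmultiples w hw)
  refine Subgroup.mem_zpowers_iff.mpr ⟨n, ?_⟩
  rw [← QuotientGroup.mk_zpow, ← I.mk_eq_mk_iff, hx.mk_zpow hcard]
  exact hn

theorem orderOf_mk (hx : CyclicFactorGen I J p x) (hcard : Nat.card B = p ^ k) :
    orderOf (x : B ⧸ I.subgroup) = p := by
  have hmk1 : ((1 : B) : B ⧸ I.addSubgroup) = 0 := by rw [one_eq_zero, QuotientAddGroup.mk_zero]
  refine orderOf_eq_prime ?_ fun h => ?_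
  · rw [← QuotientGroup.mk_pow, ← QuotientGroup.mk_one, ← I.mk_eq_mk_iff, ← zpow_natCast,
      hx.mk_zpow hcard, hmk1, natCast_zsmul, ← hx.addOrderOf_mk, addOrderOf_nsmul_eq_zero]
  · rw [← QuotientGroup.mk_one, ← I.mk_eq_mk_iff, hmk1] at h
    have := hx.addOrderOf_mk
    rw [h, addOrderOf_zero] at this
    exact (Fact.out : p.Prime).one_lt.ne this

theorem commute_mk (hx : CyclicFactorGen I J p x) (hcard : Nat.card B = p ^ k)
    (y : B) {w : B} (hw : w ∈ J.carrier) : Commute (y : B ⧸ I.subgroup) w := by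
  have hyx : Commute (y : B ⧸ I.subgroup) x := by
    refine commute_of_conj_mem_zpowers (hx.orderOf_mk hcard) (k := k) ?_
      (hx.mk_mem_zpowers hcard (J.mulConj_mem y hx.mem))
    rw [← QuotientGroup.mk_pow, ← hcard, pow_card_eq_one', QuotientGroup.mk_one]
  obtain ⟨n, hn⟩ := Subgroup.mem_zpowers_iff.mp (hx.mk_mem_zpowers hcard hw)
  rw [← hn]
  exact hyx.zpow_right n

theorem memZetaQuot (hx : CyclicFactorGen I J p x) (hcard : Nat.card B = p ^ k)
    {z : B} (hz : z ∈ J.carrier) : MemZetaQuot I.carrier z := by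
  have hmul (y : B) : (y : B ⧸ I.subgroup) * z = z * y := hx.commute_mk hcard y hz
  have hadd (y : B) : (y : B ⧸ I.addSubgroup) + z = z + y := hx.addCommute_mk hcard y hz
  refine ⟨⟨Set.mem_univ z, fun y _ => ?_, fun y _ => ?_⟩, fun y _ => ?_⟩
  · -- `z + λ_z y = z * y ≡ y * z = y + λ_y z ≡ y + z ≡ z + y`
    have h : ((z * y : B) : B ⧸ I.addSubgroup) = (y * z : B) := by
      rw [I.mk_eq_mk_iff, QuotientGroup.mk_mul, QuotientGroup.mk_mul, hmul]
    rw [mul_eq_add_lam, mul_eq_add_lam, QuotientAddGroup.mk_add, QuotientAddGroup.mk_add,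
      hx.mk_lam hcard y hz, hadd] at h
    exact QuotientAddGroup.eq.mp (add_left_cancel h).symm
  · have h : ((y + z : B) : B ⧸ I.addSubgroup) = (z + y : B) := by
      rw [QuotientAddGroup.mk_add, QuotientAddGroup.mk_add, hadd]
    exact QuotientAddGroup.eq.mp h
  · have h : ((y * z : B) : B ⧸ I.subgroup) = (z * y : B) := by
      rw [QuotientGroup.mk_mul, QuotientGroup.mk_mul, hmul]
    exact QuotientGroup.eq.mp h

theorem exists_of_quotPrimeOrder {q : ℕ} (hcard : Nat.card B = p ^ k)
    (hq : QuotPrimeOrder I.carrier J.carrier q) : ∃ x, CyclicFactorGen I J p x := by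
  obtain ⟨hqp, x, hxJ, hxI, hqx, hgen⟩ := hq
  have hxq : addOrderOf (x : B ⧸ I.addSubgroup) = q := by
    have := Fact.mk hqp
    refine addOrderOf_eq_prime ?_ fun h => hxI ((QuotientAddGroup.eq_zero_iff x).mp h)
    rw [← QuotientAddGroup.mk_nsmul]
    exact (QuotientAddGroup.eq_zero_iff _).mpr hqx
  have hq_eq : q = p := by
    have hpk : p ^ k • (x : B ⧸ I.addSubgroup) = 0 := by
      rw [← QuotientAddGroup.mk_nsmul, ← hcard, card_nsmul_eq_zero', QuotientAddGroup.mk_zero]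
    have hdvd : q ∣ p ^ k := hxq ▸ addOrderOf_dvd_of_nsmul_eq_zero hpk
    exact (Nat.prime_dvd_prime_iff_eq hqp Fact.out).mp (hqp.dvd_of_dvd_pow hdvd)
  refine ⟨x, hxJ, hq_eq ▸ hxq, fun w hw => ?_⟩
  obtain ⟨n, hn⟩ := hgen w hw
  exact AddSubgroup.mem_zmultiples_iff.mpr
    ⟨n, by rw [← QuotientAddGroup.mk_zsmul]; exact QuotientAddGroup.eq.mpr hn⟩

end CyclicFactorGen

theorem not_quotAddInfCyclic [Finite B] {I J : Set B} (hI : (0 : B) ∈ I) :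
    ¬QuotAddInfCyclic I J := by
  rintro ⟨x, -, -, hfree⟩
  have hcard : (Nat.card B : ℤ) • x ∈ I := by rwa [natCast_zsmul, card_nsmul_eq_zero']
  exact Nat.card_pos.ne' (by exact_mod_cast hfree _ hcard)

theorem MemZetaQuot.mono {I I' : Set B} (h : I ⊆ I') {x : B} (hx : MemZetaQuot I x) :
    MemZetaQuot I' x :=
  ⟨⟨hx.1.1, fun y hy => h (hx.1.2.1 y hy), fun y hy => h (hx.1.2.2 y hy)⟩,
    fun y hy => h (hx.2 y hy)⟩

theorem subset_zetaChain {n : ℕ} {I : ℕ → Set B} (h0 : I 0 = {0})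
    (hstep : ∀ i < n, ∀ z ∈ I (i + 1), MemZetaQuot (I i) z) :
    ∀ i ≤ n, I i ⊆ zetaChain B i := by
  intro i
  induction i with
  | zero => exact fun _ => h0.subset
  | succ i ih => exact fun hi z hz => (hstep i hi z hz).mono (ih (Nat.le_of_succ_le hi))

end SkewBrace

namespace SkewBrace

/-- A finite supersoluble brace of prime power order is centrally nilpotent. -/
theorem isCentrallyNilpotent_of_primePow_supersoluble (B : Type*) [SkewBrace B]
    [Finite B] (p k : ℕ) (hp : p.Prime) (hcard : Nat.card B = p ^ k)
    (hB : IsSupersoluble B) : IsCentrallyNilpotent B := by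
  have := Fact.mk hp
  obtain ⟨n, I, h0, hn, -, hfac⟩ := hB
  have hstep : ∀ i < n, ∀ z ∈ (I (i + 1)).carrier, MemZetaQuot (I i).carrier z := by
    intro i hi z hz
    rcases hfac i hi with ⟨hcyc, -⟩ | ⟨q, hq⟩
    · exact absurd hcyc (not_quotAddInfCyclic (I i).zero_mem)
    · obtain ⟨x, hx⟩ := CyclicFactorGen.exists_of_quotPrimeOrder hcard hq
      exact hx.memZetaQuot hcard hz
  refine ⟨n, Set.eq_univ_of_univ_subset ?_⟩
  rw [← hn]
  exact subset_zetaChain (I := fun i => (I i).carrier) h0 hstep n le_rfl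

end SkewBrace
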